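/- Universality of the Wasserstein distance: let (X, d, x₀) be a pointed extended pseudometric space, p ∈ [1, ∞], and (N, ρ, +, 0) a commutative monoid with a p-subadditive extended pseudometric. For every Lipschitz basepoint-preserving map φ : X → N there exists a unique Lipschitz monoid homomorphism φ̃ : (D(X, x₀), W_p[d, x₀]) → (N, ρ) with φ̃ ∘ i = φ, and moreover the Lipschitz norm ‖φ̃‖_Lip equals ‖φ‖_Lip. -/

import Mathlib

open scoped ENNReal BigOperators
noncomputable section

/-- An extended pseudometric. -/
structure IsEPMetric {X : Type*} (d : X → X → ℝ≥0∞) : Prop where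
  refl : ∀ x, d x x = 0
  symm : ∀ x y, d x y = d y x
  triangle : ∀ x y z, d x z ≤ d x y + d y z

/-- The ℓ^p norm of a finite tuple of extended nonnegative reals. -/
def lpNorm (p : ℝ≥0∞) {n : ℕ} (v : Fin n → ℝ≥0∞) : ℝ≥0∞ :=
  if p = ∞ then ⨆ i, v i else (∑ i, v i ^ p.toReal) ^ (1 / p.toReal)

variable {X : Type*}

/-- The congruence on the free commutative monoid (multisets) identifying
formal sums that differ by copies of the basepoint. -/
def diagCon (x₀ : X) : AddCon (Multiset X) where
  r s t := ∃ a b : ℕ, s + Multiset.replicate a x₀ = t + Multiset.replicate b x₀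
  iseqv := by
    constructor
    · exact fun s => ⟨0, 0, rfl⟩
    · rintro s t ⟨a, b, h⟩; exact ⟨b, a, h.symm⟩
    · rintro s t u ⟨a, b, h₁⟩ ⟨a', b', h₂⟩
      refine ⟨a + a', b' + b, ?_⟩
      have h3 : s + Multiset.replicate a x₀ + Multiset.replicate a' x₀
          = u + Multiset.replicate b' x₀ + Multiset.replicate b x₀ := by
        rw [h₁, add_right_comm, h₂, add_right_comm]
      simpa [Multiset.replicate_add, add_assoc] using h3
  add' := by
    rintro s t s' t' ⟨a, b, h₁⟩ ⟨a', b', h₂⟩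
    refine ⟨a + a', b + b', ?_⟩
    have h3 : (s + Multiset.replicate a x₀) + (s' + Multiset.replicate a' x₀)
        = (t + Multiset.replicate b x₀) + (t' + Multiset.replicate b' x₀) := by rw [h₁, h₂]
    calc s + s' + Multiset.replicate (a + a') x₀
        = (s + Multiset.replicate a x₀) + (s' + Multiset.replicate a' x₀) := by
          rw [Multiset.replicate_add]; exact add_add_add_comm s s' _ _
      _ = (t + Multiset.replicate b x₀) + (t' + Multiset.replicate b' x₀) := h3
      _ = t + t' + Multiset.replicate (b + b') x₀ := by
          rw [Multiset.replicate_add]; exact (add_add_add_comm t t' _ _).symm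

/-- The monoid of persistence diagrams on a pointed set. -/
abbrev Diagram (X : Type*) (x₀ : X) := (diagCon x₀).Quotient

/-- The canonical map `X → D(X,x₀)`. -/
def diagι (x₀ : X) (x : X) : Diagram X x₀ := (diagCon x₀).mk' {x}

/-- Pad a tuple to length `r` with copies of the basepoint. -/
def padTo (x₀ : X) {n : ℕ} (x : Fin n → X) (r : ℕ) : Fin r → X :=
  fun k => if h : (k : ℕ) < n then x ⟨k, h⟩ else x₀

/-- The minimal ℓ^p matching cost between two tuples of equal length. -/
def matchCost (d : X → X → ℝ≥0∞) (p : ℝ≥0∞) {r : ℕ} (x y : Fin r → X) : ℝ≥0∞ :=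
  ⨅ σ : Equiv.Perm (Fin r), lpNorm p (fun k => d (x k) (y (σ k)))

/-- A tuple enumerating a multiset. -/
def mFun (s : Multiset X) : Fin s.toList.length → X := fun k => s.toList.get k

/-- The p-Wasserstein cost between two multisets, padding both to the combined length. -/
def WpM (d : X → X → ℝ≥0∞) (x₀ : X) (p : ℝ≥0∞) (s t : Multiset X) : ℝ≥0∞ :=
  matchCost d p (padTo x₀ (mFun s) (Multiset.card s + Multiset.card t))
                (padTo x₀ (mFun t) (Multiset.card s + Multiset.card t))

/-- The p-Wasserstein distance on the monoid of persistence diagrams. -/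
def Wp (d : X → X → ℝ≥0∞) (x₀ : X) (p : ℝ≥0∞) (α β : Diagram X x₀) : ℝ≥0∞ :=
  ⨅ (s : Multiset X) (t : Multiset X) (_ : (diagCon x₀).mk' s = α)
    (_ : (diagCon x₀).mk' t = β), WpM d x₀ p s t

/-- The Lipschitz norm of a map between extended pseudometric spaces. -/
def eLipNorm {Y : Type*} (d : X → X → ℝ≥0∞) (ρ : Y → Y → ℝ≥0∞) (f : X → Y) : ℝ≥0∞ :=
  sInf {C : ℝ≥0∞ | ∀ x y, ρ (f x) (f y) ≤ C * d x y}

/-!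
Summing `φ` over multisets gives a homomorphism on the free commutative monoid, which descends
to diagrams because `φ x₀ = 0`. Pad two diagrams to a common length and match them by an optimal
bijection `σ`: iterating p-subadditivity bounds `ρ (∑ φ xₖ) (∑ φ y_{σ k})` by the ℓᵖ norm of
`ρ (φ xₖ) (φ y_{σ k}) ≤ C d(xₖ, y_{σ k})`, i.e. by `C` times the matching cost, so every Lipschitz
constant of `φ` is one of the extension. Conversely `W_p(i x, i y) ≤ d(x, y)`, so every Lipschitz
constant of the extension is one of `φ`. Uniqueness holds because the `i x` generate `D(X, x₀)`.
-/

lemma iSup_fin_succ {α : Type*} [CompleteLattice α] {n : ℕ} (f : Fin (n + 1) → α) :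
    ⨆ i, f i = f 0 ⊔ ⨆ i : Fin n, f i.succ := by
  rw [← (finSuccEquiv n).symm.iSup_comp, iSup_option]
  simp

lemma eLipNorm_comp_le {Y Z : Type*} {d : X → X → ℝ≥0∞} {d' : Y → Y → ℝ≥0∞}
    {ρ : Z → Z → ℝ≥0∞} {ι : X → Y} (hι : ∀ x y, d' (ι x) (ι y) ≤ d x y) (F : Y → Z) :
    eLipNorm d ρ (F ∘ ι) ≤ eLipNorm d' ρ F :=
  sInf_le_sInf fun _ hC x y => (hC (ι x) (ι y)).trans (mul_le_mul_right (hι x y) _)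

section lpNorm

variable {p : ℝ≥0∞} {n : ℕ}

lemma lpNorm_mono {v w : Fin n → ℝ≥0∞} (h : v ≤ w) : lpNorm p v ≤ lpNorm p w := by
  unfold lpNorm
  split_ifs
  · exact iSup_mono h
  · gcongr with i
    exact h i

lemma lpNorm_cons (hp : p ≠ 0) (u : ℝ≥0∞) (v : Fin n → ℝ≥0∞) :
    lpNorm p (Fin.cons u v) = lpNorm p ![u, lpNorm p v] := by
  unfold lpNorm
  split_ifs with hp_top
  · simp [iSup_fin_succ]
  · have hq := (ENNReal.toReal_pos hp hp_top).ne'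
    simp [Fin.sum_univ_succ, ← ENNReal.rpow_mul, hq]

lemma lpNorm_const_mul (hp : p ≠ 0) (c : ℝ≥0∞) (v : Fin n → ℝ≥0∞) :
    lpNorm p (c • v) = c * lpNorm p v := by
  unfold lpNorm
  split_ifs with hp_top
  · exact (ENNReal.mul_iSup c v).symm
  · have hq := ENNReal.toReal_pos hp hp_top
    simp only [Pi.smul_apply, smul_eq_mul, ENNReal.mul_rpow_of_nonneg _ _ hq.le,
      ← Finset.mul_sum]
    rw [ENNReal.mul_rpow_of_nonneg _ _ (by positivity), ← ENNReal.rpow_mul,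
      mul_one_div_cancel hq.ne', ENNReal.rpow_one]

lemma lpNorm_pi_single (hp : p ≠ 0) (i : Fin n) (a : ℝ≥0∞) :
    lpNorm p (Pi.single i a) = a := by
  unfold lpNorm
  split_ifs with hp_top
  · refine le_antisymm (iSup_le fun j => ?_) (le_iSup_of_le i (by simp))
    rcases eq_or_ne j i with rfl | hj <;> simp [*]
  · have hq := ENNReal.toReal_pos hp hp_top
    rw [Finset.sum_eq_single i (fun j _ hj => by simp [hj, hq]) (by simp)]
    simp [← ENNReal.rpow_mul, hq.ne']

end lpNorm

def PSubadditive {N : Type*} [Add N] (p : ℝ≥0∞) (ρ : N → N → ℝ≥0∞) : Prop :=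
  ∀ a a' b b' : N, ρ (a + b) (a' + b') ≤ lpNorm p ![ρ a a', ρ b b']

lemma PSubadditive.apply_sum_le_lpNorm {N : Type*} [AddCommMonoid N] {p : ℝ≥0∞}
    {ρ : N → N → ℝ≥0∞} (hρ : PSubadditive p ρ) (hp : p ≠ 0) (hρ₀ : ρ 0 0 = 0) :
    ∀ {n : ℕ} (a b : Fin n → N), ρ (∑ i, a i) (∑ i, b i) ≤ lpNorm p fun i => ρ (a i) (b i)
  | 0, _, _ => by simp [hρ₀]
  | n + 1, a, b => by
    rw [Fin.sum_univ_succ, Fin.sum_univ_succ]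
    calc ρ (a 0 + ∑ i : Fin n, a i.succ) (b 0 + ∑ i : Fin n, b i.succ)
        ≤ lpNorm p ![ρ (a 0) (b 0), ρ (∑ i : Fin n, a i.succ) (∑ i : Fin n, b i.succ)] :=
          hρ _ _ _ _
      _ ≤ lpNorm p ![ρ (a 0) (b 0), lpNorm p fun i : Fin n => ρ (a i.succ) (b i.succ)] := by
          refine lpNorm_mono fun i => ?_
          fin_cases i
          · exact le_rfl
          · exact hρ.apply_sum_le_lpNorm hp hρ₀ _ _
      _ = lpNorm p fun i => ρ (a i) (b i) := by
          rw [← lpNorm_cons hp]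
          congr 1
          ext i
          cases i using Fin.cases <;> rfl

section Matching

variable {M : Type*} [AddCommMonoid M]

lemma sum_padTo (x₀ : X) {φ : X → M} (hφ₀ : φ x₀ = 0) {n r : ℕ} (x : Fin n → X) (h : n ≤ r) :
    ∑ k, φ (padTo x₀ x r k) = ∑ i, φ (x i) := by
  obtain ⟨m, rfl⟩ := Nat.exists_eq_add_of_le h
  simp [Fin.sum_univ_add, padTo, hφ₀]

lemma sum_mFun (φ : X → M) (s : Multiset X) : ∑ i, φ (mFun s i) = (s.map φ).sum := by
  rw [← Multiset.sum_map_toList, ← Fin.sum_univ_fun_getElem]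
  rfl

variable {N : Type*} [AddCommMonoid N] {d : X → X → ℝ≥0∞} {p : ℝ≥0∞} {ρ : N → N → ℝ≥0∞}
  {φ : X → N} {C : ℝ≥0∞}

lemma apply_sum_le_mul_matchCost (hρ : PSubadditive p ρ) (hp : p ≠ 0) (hρ₀ : ρ 0 0 = 0)
    (hLip : ∀ x y, ρ (φ x) (φ y) ≤ C * d x y) {r : ℕ} (x y : Fin r → X) :
    ρ (∑ k, φ (x k)) (∑ k, φ (y k)) ≤ C * matchCost d p x y := by
  obtain ⟨σ, hσ⟩ := Finite.exists_min fun σ : Equiv.Perm (Fin r) =>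
    lpNorm p fun k => d (x k) (y (σ k))
  have hσ_opt : matchCost d p x y = lpNorm p fun k => d (x k) (y (σ k)) :=
    le_antisymm (iInf_le _ σ) (le_iInf hσ)
  calc ρ (∑ k, φ (x k)) (∑ k, φ (y k))
      = ρ (∑ k, φ (x k)) (∑ k, φ (y (σ k))) := by rw [Equiv.sum_comp σ fun k => φ (y k)]
    _ ≤ lpNorm p fun k => ρ (φ (x k)) (φ (y (σ k))) := hρ.apply_sum_le_lpNorm hp hρ₀ _ _
    _ ≤ lpNorm p (C • fun k => d (x k) (y (σ k))) := lpNorm_mono fun k => hLip _ _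
    _ = C * matchCost d p x y := by rw [lpNorm_const_mul hp, hσ_opt]

lemma sum_map_le_mul_WpM (x₀ : X) (hρ : PSubadditive p ρ) (hp : p ≠ 0) (hρ₀ : ρ 0 0 = 0)
    (hφ₀ : φ x₀ = 0) (hLip : ∀ x y, ρ (φ x) (φ y) ≤ C * d x y) (s t : Multiset X) :
    ρ (s.map φ).sum (t.map φ).sum ≤ C * WpM d x₀ p s t := by
  have hs : s.toList.length ≤ Multiset.card s + Multiset.card t := by simp
  have ht : t.toList.length ≤ Multiset.card s + Multiset.card t := by simp
  rw [WpM]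
  simpa only [sum_padTo x₀ hφ₀ _ hs, sum_padTo x₀ hφ₀ _ ht, sum_mFun] using
    apply_sum_le_mul_matchCost hρ hp hρ₀ hLip
      (padTo x₀ (mFun s) (Multiset.card s + Multiset.card t))
      (padTo x₀ (mFun t) (Multiset.card s + Multiset.card t))

end Matching

namespace Diagram

variable {N : Type*} [AddCommMonoid N] {x₀ : X}

lemma addHom_ext {f g : Diagram X x₀ →+ N} (h : ∀ x, f (diagι x₀ x) = g (diagι x₀ x)) :
    f = g :=
  AddCon.hom_ext (Multiset.addHom_ext h)

def lift (φ : X → N) (hφ₀ : φ x₀ = 0) : Diagram X x₀ →+ N :=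
  (diagCon x₀).lift (Multiset.sumAddMonoidHom.comp (Multiset.mapAddMonoidHom φ)) <| by
    rintro s t ⟨a, b, h⟩
    simpa [Multiset.map_replicate, hφ₀] using congr_arg (fun u => (u.map φ).sum) h

variable {φ : X → N} {hφ₀ : φ x₀ = 0}

lemma lift_mk' (s : Multiset X) : lift φ hφ₀ ((diagCon x₀).mk' s) = (s.map φ).sum :=
  AddCon.lift_mk' _ _

lemma lift_diagι (x : X) : lift φ hφ₀ (diagι x₀ x) = φ x := by
  rw [diagι, lift_mk', Multiset.map_singleton, Multiset.sum_singleton]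

end Diagram

section Wasserstein

variable {N : Type*} [AddCommMonoid N] {d : X → X → ℝ≥0∞} {x₀ : X} {p : ℝ≥0∞}
  {ρ : N → N → ℝ≥0∞} {φ : X → N} {hφ₀ : φ x₀ = 0} {C : ℝ≥0∞}

lemma Diagram.lift_le_mul_Wp (hρ : PSubadditive p ρ) (hp : p ≠ 0) (hρ₀ : ρ 0 0 = 0)
    (hC : C ≠ ∞) (hLip : ∀ x y, ρ (φ x) (φ y) ≤ C * d x y) (α β : Diagram X x₀) :
    ρ (lift φ hφ₀ α) (lift φ hφ₀ β) ≤ C * Wp d x₀ p α β := by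
  obtain ⟨s₀, rfl⟩ := AddCon.mk'_surjective α
  obtain ⟨t₀, rfl⟩ := AddCon.mk'_surjective β
  rcases eq_or_ne C 0 with rfl | hC₀
  · rw [lift_mk', lift_mk']
    exact sum_map_le_mul_WpM x₀ hρ hp hρ₀ hφ₀ hLip s₀ t₀ |>.trans (by simp)
  · simp only [Wp, ENNReal.mul_iInf_of_ne hC₀ hC]
    refine le_iInf fun s => le_iInf fun t => le_iInf₂ fun hs ht => ?_
    rw [← hs, ← ht, lift_mk', lift_mk']
    exact sum_map_le_mul_WpM x₀ hρ hp hρ₀ hφ₀ hLip s t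

lemma Wp_diagι_le (hd₀ : d x₀ x₀ = 0) (hp : p ≠ 0) (x y : X) :
    Wp d x₀ p (diagι x₀ x) (diagι x₀ y) ≤ d x y := by
  have hpad : ∀ z : X, padTo x₀ (mFun {z}) 2 = ![z, x₀] := by
    intro z
    ext k
    fin_cases k <;> simp [padTo, mFun]
  calc Wp d x₀ p (diagι x₀ x) (diagι x₀ y)
      ≤ WpM d x₀ p {x} {y} :=
        iInf_le_of_le {x} <| iInf_le_of_le {y} <| iInf_le_of_le rfl <| iInf_le _ rfl
    -- the identity matching; `card {x} + card {y}` reduces to `2`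
    _ ≤ lpNorm p fun k => d (padTo x₀ (mFun {x}) 2 k) (padTo x₀ (mFun {y}) 2 k) :=
        iInf_le _ (Equiv.refl _)
    _ = lpNorm p (Pi.single 0 (d x y)) := by
        rw [hpad, hpad]
        congr 1
        ext k
        fin_cases k <;> simp [hd₀]
    _ = d x y := lpNorm_pi_single hp 0 _

lemma Diagram.eLipNorm_lift (hd₀ : d x₀ x₀ = 0) (hρ : PSubadditive p ρ) (hp : p ≠ 0)
    (hρ₀ : ρ 0 0 = 0) :
    eLipNorm (Wp d x₀ p) ρ (lift φ hφ₀) = eLipNorm d ρ φ := by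
  refine le_antisymm (le_sInf fun C hC => ?_) ?_
  · rcases eq_or_ne C ∞ with rfl | hC_top
    · exact le_top
    · exact sInf_le (lift_le_mul_Wp hρ hp hρ₀ hC_top hC)
  · calc eLipNorm d ρ φ = eLipNorm d ρ (lift φ hφ₀ ∘ diagι x₀) := by
          congr 1
          ext x
          exact lift_diagι x |>.symm
      _ ≤ eLipNorm (Wp d x₀ p) ρ (lift φ hφ₀) := eLipNorm_comp_le (Wp_diagι_le hd₀ hp) _

end Wasserstein

/-- Universality of the Wasserstein distance: every Lipschitz basepoint-preserving map
`φ : X → N` into a commutative monoid with a p-subadditive extended pseudometric extends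
uniquely to a Lipschitz monoid homomorphism `φ̃ : D(X,x₀) → N`, and `‖φ̃‖_Lip = ‖φ‖_Lip`. -/
theorem wasserstein_universal (d : X → X → ℝ≥0∞) (hd : IsEPMetric d) (x₀ : X)
    (p : ℝ≥0∞) (hp : 1 ≤ p) {N : Type*} [AddCommMonoid N]
    (ρ : N → N → ℝ≥0∞) (hρ : IsEPMetric ρ)
    (hsub : ∀ a a' b b' : N, ρ (a + b) (a' + b') ≤ lpNorm p ![ρ a a', ρ b b'])
    (φ : X → N) (hφ₀ : φ x₀ = 0)
    (C : ℝ≥0∞) (hC : C ≠ ∞) (hLip : ∀ x y : X, ρ (φ x) (φ y) ≤ C * d x y) :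
    (∃! φt : Diagram X x₀ →+ N,
      (∃ C' : ℝ≥0∞, C' ≠ ∞ ∧ ∀ α β : Diagram X x₀, ρ (φt α) (φt β) ≤ C' * Wp d x₀ p α β) ∧
      ∀ x : X, φt (diagι x₀ x) = φ x) ∧
    (∀ φt : Diagram X x₀ →+ N,
      ((∃ C' : ℝ≥0∞, C' ≠ ∞ ∧ ∀ α β : Diagram X x₀, ρ (φt α) (φt β) ≤ C' * Wp d x₀ p α β) ∧
        ∀ x : X, φt (diagι x₀ x) = φ x) →
      eLipNorm (Wp d x₀ p) ρ (⇑φt) = eLipNorm d ρ φ) := by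
  have hp₀ : p ≠ 0 := (zero_lt_one.trans_le hp).ne'
  have eq_lift : ∀ ψ : Diagram X x₀ →+ N, (∀ x, ψ (diagι x₀ x) = φ x) →
      ψ = Diagram.lift φ hφ₀ :=
    fun ψ hψ => Diagram.addHom_ext fun x => (hψ x).trans (Diagram.lift_diagι x).symm
  have lipschitz := Diagram.lift_le_mul_Wp (hφ₀ := hφ₀) hsub hp₀ (hρ.refl 0) hC hLip
  refine ⟨⟨_, ⟨⟨C, hC, lipschitz⟩, Diagram.lift_diagι⟩, fun ψ hψ => eq_lift ψ hψ.2⟩, ?_⟩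
  rintro ψ ⟨-, hψ⟩
  rw [eq_lift ψ hψ]
  exact Diagram.eLipNorm_lift (hd.refl x₀) hsub hp₀ (hρ.refl 0)

end
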